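/- arXiv:2502.19851 — 2 statements merged into one kernel-verified Lean document; each statement's English description precedes it below -/
import Mathlib

section
/- Let M ≥ 2 and let B_M be the class of functions w: [0,1] → [−1,1] whose total variation is at most M. Then for any measurable forecast f: 𝒳 → [0,1] and any joint distribution of (X,Y) with Y ∈ [0,1]: Δ_Cutoff(f) ≤ Δ_wCE(f; B_M) ≤ (M+2)·Δ_Cutoff(f). -/
/-!
The lower bound holds because `±1_I` has total variation at most `2 ≤ M` for every interval `I`.

For the upper bound, a weight `w` of variation `V ≤ M` on `[0, 1]` splits as
`w = w 0 + (p - p 0) - (q - q 0)` with `p`, `q` monotone on `[0, 1]` and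
`(p 1 - p 0) + (q 1 - q 0) = V` (Jordan decomposition through the variation function).
By the layer-cake formula, `E[(Y - f X) (p (f X) - p 0)]` is the integral over
`s ∈ [0, p 1 - p 0)` of `E[(Y - f X) 1{f X ∈ I_s}]`, where the superlevel sets
`I_s = {u ∈ [0, 1] | s < p u - p 0}` are intervals; so it is at most `(p 1 - p 0) Δ_Cutoff`
in absolute value. With the constant term this gives even `(V + 1) Δ_Cutoff`.
-/

open MeasureTheory Set

/-- Cutoff Calibration Error: supremum over intervals `I ⊆ [0,1]` of
`|E[(Y − f(X))·1{f(X) ∈ I}]|`. -/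
noncomputable def cutoffCE {Ω 𝒳 : Type*} [MeasurableSpace Ω] [MeasurableSpace 𝒳]
    (μ : Measure Ω) (X : Ω → 𝒳) (Y : Ω → ℝ) (f : 𝒳 → ℝ) : ℝ :=
  ⨆ I : {I : Set ℝ // I ⊆ Icc 0 1 ∧ I.OrdConnected},
    |∫ ω, (Y ω - f (X ω)) * I.1.indicator (1 : ℝ → ℝ) (f (X ω)) ∂μ|

/-- Weighted calibration error with respect to the class `B_M` of weighting functions
`w : [0,1] → [−1,1]` with total variation at most `M` on `[0,1]`:
`sup_{w ∈ B_M} E[w(f(X))·(Y − f(X))]`. -/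
noncomputable def wCEBV {Ω 𝒳 : Type*} [MeasurableSpace Ω] [MeasurableSpace 𝒳]
    (μ : Measure Ω) (X : Ω → 𝒳) (Y : Ω → ℝ) (f : 𝒳 → ℝ) (M : ℝ) : ℝ :=
  ⨆ w : {w : ℝ → ℝ // (∀ t ∈ Icc (0:ℝ) 1, w t ∈ Icc (-1:ℝ) 1) ∧
      eVariationOn w (Icc 0 1) ≤ ENNReal.ofReal M},
    ∫ ω, w.1 (f (X ω)) * (Y ω - f (X ω)) ∂μ

section Variation

variable {α : Type*} [LinearOrder α]

theorem eVariationOn_neg {E : Type*} [SeminormedAddCommGroup E] (f : α → E) (s : Set α) :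
    eVariationOn (-f) s = eVariationOn f s := by
  simp only [eVariationOn, Pi.neg_apply, edist_neg_neg]

theorem eVariationOn_add_le {E : Type*} [SeminormedAddCommGroup E] (f g : α → E) (s : Set α) :
    eVariationOn (f + g) s ≤ eVariationOn f s + eVariationOn g s := by
  refine iSup_le fun ⟨n, u, hu, us⟩ => ?_
  calc ∑ i ∈ Finset.range n, edist ((f + g) (u (i + 1))) ((f + g) (u i))
      ≤ ∑ i ∈ Finset.range n,
          (edist (f (u (i + 1))) (f (u i)) + edist (g (u (i + 1))) (g (u i))) :=
        Finset.sum_le_sum fun i _ => edist_add_add_le _ _ _ _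
    _ = _ := Finset.sum_add_distrib
    _ ≤ _ := add_le_add (eVariationOn.sum_le hu us) (eVariationOn.sum_le hu us)

theorem MonotoneOn.eVariationOn_le_of_mapsTo_Icc {f : α → ℝ} {s : Set α} {c d : ℝ}
    (hf : MonotoneOn f s) (hfs : MapsTo f s (Icc c d)) :
    eVariationOn f s ≤ ENNReal.ofReal (d - c) := by
  rw [eVariationOn.eq_biSup_inter_Icc]
  refine iSup₂_le fun p ⟨hp₁, hp₂, _⟩ => ?_
  rw [hf.eVariationOn_eq hp₁ hp₂]
  exact ENNReal.ofReal_le_ofReal (by linarith [(hfs hp₁).1, (hfs hp₂).2])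

theorem IsUpperSet.eVariationOn_indicator_one_le {U : Set α} (hU : IsUpperSet U) (s : Set α) :
    eVariationOn (U.indicator (1 : α → ℝ)) s ≤ 1 := by
  have hmono : Monotone (U.indicator (1 : α → ℝ)) := by
    intro x y hxy
    by_cases hx : x ∈ U
    · simp [indicator_of_mem hx, indicator_of_mem (hU hxy hx)]
    · rw [indicator_of_notMem hx]
      exact indicator_nonneg (fun _ _ => zero_le_one) y
  have hmaps : MapsTo (U.indicator (1 : α → ℝ)) s (Icc 0 1) := fun x _ => by
    by_cases hx : x ∈ U <;> simp [hx]
  simpa using (hmono.monotoneOn s).eVariationOn_le_of_mapsTo_Icc hmaps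

theorem Set.OrdConnected.eVariationOn_indicator_one_le {I : Set α} (hI : I.OrdConnected)
    (s : Set α) : eVariationOn (I.indicator (1 : α → ℝ)) s ≤ 2 := by
  set U : Set α := ↑(upperClosure I)
  have hIU : I ⊆ U := subset_upperClosure
  have hUI : IsUpperSet (U \ I) := by
    rintro x y hxy ⟨hxU, hxI⟩
    refine ⟨(upperClosure I).upper hxy hxU, fun hyI => hxI ?_⟩
    obtain ⟨a, haI, hax⟩ := hxU
    exact hI.out haI hyI ⟨hax, hxy⟩
  have hsplit : I.indicator (1 : α → ℝ) = U.indicator 1 + -(U \ I).indicator 1 := by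
    rw [indicator_sdiff hIU]
    abel
  calc eVariationOn (I.indicator (1 : α → ℝ)) s
      ≤ eVariationOn (U.indicator (1 : α → ℝ)) s + eVariationOn ((U \ I).indicator 1) s := by
        rw [hsplit, ← eVariationOn_neg ((U \ I).indicator 1)]
        exact eVariationOn_add_le _ _ _
    _ ≤ 1 + 1 := add_le_add ((upperClosure I).upper.eVariationOn_indicator_one_le s)
        (hUI.eVariationOn_indicator_one_le s)
    _ = 2 := one_add_one_eq_two

theorem LocallyBoundedVariationOn.exists_monotoneOn_sub_monotoneOn_add_eq {f : α → ℝ}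
    {s : Set α} (hf : LocallyBoundedVariationOn f s) {a : α} (ha : a ∈ s) :
    ∃ p q : α → ℝ, MonotoneOn p s ∧ MonotoneOn q s ∧ f = p - q ∧
      p + q = variationOnFromTo f s a := by
  refine ⟨fun x => (variationOnFromTo f s a x + f x) / 2,
    fun x => (variationOnFromTo f s a x - f x) / 2, fun x hx y hy hxy => ?_,
    fun x hx y hy hxy => ?_, by ext; simp; ring, by ext; simp; ring⟩
  · have := variationOnFromTo.add_self_monotoneOn hf ha hx hy hxy
    simp only [Pi.add_apply] at this
    linarith
  · have := variationOnFromTo.sub_self_monotoneOn hf ha hx hy hxy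
    simp only [Pi.sub_apply] at this
    linarith

end Variation

theorem MonotoneOn.sub_apply_left_mem_Icc {P : ℝ → ℝ} {a b x : ℝ} (hP : MonotoneOn P (Icc a b))
    (hx : x ∈ Icc a b) : P x - P a ∈ Icc 0 (P b - P a) :=
  ⟨sub_nonneg.2 (hP ⟨le_rfl, hx.1.trans hx.2⟩ hx hx.1),
    sub_le_sub_right (hP hx ⟨hx.1.trans hx.2, le_rfl⟩ hx.2) _⟩

theorem MonotoneOn.measurable_comp {Ω : Type*} [MeasurableSpace Ω] {P : ℝ → ℝ} {a b : ℝ}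
    (hab : a ≤ b) (hP : MonotoneOn P (Icc a b)) {p : Ω → ℝ} (hp : Measurable p)
    (hpab : ∀ ω, p ω ∈ Icc a b) : Measurable fun ω => P (p ω) := by
  have hext : (fun ω => P (p ω)) = IccExtend hab (fun t => P t) ∘ p :=
    funext fun ω => (IccExtend_of_mem hab (fun t : Icc a b => P t) (hpab ω)).symm
  rw [hext]
  exact ((monotoneOn_iff_monotone.1 hP).IccExtend hab).measurable.comp hp

section LayerCake

variable {Ω : Type*} [MeasurableSpace Ω] {μ : Measure Ω} [SFinite μ] {g h : Ω → ℝ} {B : ℝ}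

theorem integral_mul_eq_setIntegral_integral_mul_indicator (hg : Integrable g μ)
    (hh : Measurable h) (h0 : ∀ ω, 0 ≤ h ω) (hB : ∀ ω, h ω ≤ B) :
    ∫ ω, g ω * h ω ∂μ = ∫ s in Ico 0 B, ∫ ω, g ω * {ω | s < h ω}.indicator 1 ω ∂μ := by
  have hlayer : ∀ ω, ∫ s in Ico 0 B, {ω | s < h ω}.indicator 1 ω = h ω := fun ω => by
    change ∫ s in Ico 0 B, (Iio (h ω)).indicator 1 s = h ω
    rw [integral_indicator_one measurableSet_Iio, measureReal_restrict_apply measurableSet_Iio,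
      inter_comm, Ico_inter_Iio, min_eq_right (hB ω), Real.volume_real_Ico, sub_zero,
      max_eq_left (h0 ω)]
  have hint : Integrable (Function.uncurry fun ω s => g ω * {ω | s < h ω}.indicator 1 ω)
      (μ.prod (volume.restrict (Ico 0 B))) := by
    refine (hg.norm.mul_prod (integrable_const (1 : ℝ))).mono' ?_ (.of_forall fun p => ?_)
    · exact hg.aestronglyMeasurable.comp_fst.mul (measurable_const.indicator
        (measurableSet_lt measurable_snd (hh.comp measurable_fst))).aestronglyMeasurable
    · by_cases hp : p.2 < h p.1 <;> simp [Function.uncurry, hp]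
  rw [← integral_integral_swap hint]
  refine integral_congr_ae (.of_forall fun ω => ?_)
  dsimp only
  rw [integral_const_mul, hlayer ω]

theorem abs_integral_mul_le_of_forall_abs_integral_mul_indicator_le (hg : Integrable g μ)
    (hh : Measurable h) (h0 : ∀ ω, 0 ≤ h ω) (hB : ∀ ω, h ω ≤ B) (hB0 : 0 ≤ B) {C : ℝ}
    (hC : ∀ s ∈ Ico 0 B, |∫ ω, g ω * {ω | s < h ω}.indicator 1 ω ∂μ| ≤ C) :
    |∫ ω, g ω * h ω ∂μ| ≤ B * C := by
  rw [integral_mul_eq_setIntegral_integral_mul_indicator hg hh h0 hB, ← Real.norm_eq_abs]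
  calc _ ≤ C * volume.real (Ico 0 B) := norm_setIntegral_le_of_norm_le_const measure_Ico_lt_top hC
    _ = B * C := by rw [Real.volume_real_Ico, sub_zero, max_eq_left hB0, mul_comm]

end LayerCake

section Calibration

variable {Ω 𝒳 : Type*} {X : Ω → 𝒳} {Y : Ω → ℝ} {f : 𝒳 → ℝ}

theorem abs_residual_le_one (hY01 : ∀ ω, Y ω ∈ Icc (0:ℝ) 1) (hf01 : ∀ x, f x ∈ Icc (0:ℝ) 1)
    (ω : Ω) : |Y ω - f (X ω)| ≤ 1 :=
  abs_sub_le_of_nonneg_of_le (hY01 ω).1 (hY01 ω).2 (hf01 (X ω)).1 (hf01 (X ω)).2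

variable [MeasurableSpace Ω] {μ : Measure Ω}

theorem abs_integral_residual_mul_le [IsFiniteMeasure μ] (hY01 : ∀ ω, Y ω ∈ Icc (0:ℝ) 1)
    (hf01 : ∀ x, f x ∈ Icc (0:ℝ) 1) {k : Ω → ℝ} (hk : ∀ ω, |k ω| ≤ 1) :
    |∫ ω, (Y ω - f (X ω)) * k ω ∂μ| ≤ μ.real univ := by
  rw [← Real.norm_eq_abs, ← one_mul (μ.real univ)]
  refine norm_integral_le_of_norm_le_const (.of_forall fun ω => ?_)
  rw [norm_mul, ← one_mul 1]
  exact mul_le_mul (abs_residual_le_one hY01 hf01 ω) (hk ω) (norm_nonneg _) zero_le_one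

variable [MeasurableSpace 𝒳]

theorem integrable_residual [IsFiniteMeasure μ] (hX : Measurable X) (hY : Measurable Y)
    (hf : Measurable f) (hY01 : ∀ ω, Y ω ∈ Icc (0:ℝ) 1) (hf01 : ∀ x, f x ∈ Icc (0:ℝ) 1) :
    Integrable (fun ω => Y ω - f (X ω)) μ :=
  .of_bound (hY.sub (hf.comp hX)).aestronglyMeasurable 1
    (.of_forall (abs_residual_le_one hY01 hf01))

theorem cutoffCE_nonneg : 0 ≤ cutoffCE μ X Y f :=
  Real.iSup_nonneg fun _ => abs_nonneg _

theorem abs_integral_residual_mul_indicator_le_cutoffCE [IsFiniteMeasure μ]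
    (hY01 : ∀ ω, Y ω ∈ Icc (0:ℝ) 1) (hf01 : ∀ x, f x ∈ Icc (0:ℝ) 1) {I : Set ℝ}
    (hI : I ⊆ Icc 0 1) (hIc : I.OrdConnected) :
    |∫ ω, (Y ω - f (X ω)) * I.indicator 1 (f (X ω)) ∂μ| ≤ cutoffCE μ X Y f := by
  refine le_ciSup (f := fun I : {I : Set ℝ // I ⊆ Icc 0 1 ∧ I.OrdConnected} =>
    |∫ ω, (Y ω - f (X ω)) * I.1.indicator (1 : ℝ → ℝ) (f (X ω)) ∂μ|) ?_ ⟨I, hI, hIc⟩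
  refine ⟨μ.real univ, forall_mem_range.2 fun I => abs_integral_residual_mul_le hY01 hf01 ?_⟩
  intro ω
  by_cases h : f (X ω) ∈ I.1 <;> simp [h]

theorem abs_integral_residual_le_cutoffCE [IsFiniteMeasure μ]
    (hY01 : ∀ ω, Y ω ∈ Icc (0:ℝ) 1) (hf01 : ∀ x, f x ∈ Icc (0:ℝ) 1) :
    |∫ ω, (Y ω - f (X ω)) ∂μ| ≤ cutoffCE μ X Y f := by
  simpa [indicator_of_mem (hf01 _)] using
    abs_integral_residual_mul_indicator_le_cutoffCE (μ := μ) hY01 hf01 subset_rfl ordConnected_Icc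

theorem integrable_residual_mul_sub [IsFiniteMeasure μ] (hX : Measurable X) (hY : Measurable Y)
    (hf : Measurable f) (hY01 : ∀ ω, Y ω ∈ Icc (0:ℝ) 1) (hf01 : ∀ x, f x ∈ Icc (0:ℝ) 1)
    {P : ℝ → ℝ} (hP : MonotoneOn P (Icc 0 1)) :
    Integrable (fun ω => (Y ω - f (X ω)) * (P (f (X ω)) - P 0)) μ := by
  have hPf : Measurable fun ω => P (f (X ω)) :=
    hP.measurable_comp zero_le_one (hf.comp hX) fun ω => hf01 (X ω)
  refine (integrable_residual hX hY hf hY01 hf01).mul_bdd (hPf.sub_const _).aestronglyMeasurable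
    (c := P 1 - P 0) (.of_forall fun ω => ?_)
  have h := hP.sub_apply_left_mem_Icc (hf01 (X ω))
  rw [Real.norm_eq_abs, abs_of_nonneg h.1]
  exact h.2

theorem abs_integral_residual_mul_sub_le_cutoffCE [IsFiniteMeasure μ] (hX : Measurable X)
    (hY : Measurable Y) (hf : Measurable f) (hY01 : ∀ ω, Y ω ∈ Icc (0:ℝ) 1)
    (hf01 : ∀ x, f x ∈ Icc (0:ℝ) 1) {P : ℝ → ℝ} (hP : MonotoneOn P (Icc 0 1)) :
    |∫ ω, (Y ω - f (X ω)) * (P (f (X ω)) - P 0) ∂μ| ≤ (P 1 - P 0) * cutoffCE μ X Y f := by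
  have hPf : Measurable fun ω => P (f (X ω)) :=
    hP.measurable_comp zero_le_one (hf.comp hX) fun ω => hf01 (X ω)
  refine abs_integral_mul_le_of_forall_abs_integral_mul_indicator_le
    (integrable_residual hX hY hf hY01 hf01) (hPf.sub_const _)
    (fun ω => (hP.sub_apply_left_mem_Icc (hf01 (X ω))).1)
    (fun ω => (hP.sub_apply_left_mem_Icc (hf01 (X ω))).2)
    (hP.sub_apply_left_mem_Icc (right_mem_Icc.2 zero_le_one)).1 fun s _ => ?_
  set I : Set ℝ := {u ∈ Icc 0 1 | s < P u - P 0}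
  have hIc : I.OrdConnected := ⟨fun x hx y hy z hz =>
    have hz01 : z ∈ Icc (0:ℝ) 1 := Icc_subset_Icc hx.1.1 hy.1.2 hz
    ⟨hz01, hx.2.trans_le (sub_le_sub_right (hP hx.1 hz01 hz.1) _)⟩⟩
  have hind : ∀ ω, {ω | s < P (f (X ω)) - P 0}.indicator (1 : Ω → ℝ) ω =
      I.indicator 1 (f (X ω)) := fun ω => by
    by_cases h : s < P (f (X ω)) - P 0
    · rw [indicator_of_mem (show ω ∈ {ω | s < P (f (X ω)) - P 0} from h),
        indicator_of_mem (show f (X ω) ∈ I from ⟨hf01 (X ω), h⟩)]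
      rfl
    · rw [indicator_of_notMem (show ω ∉ {ω | s < P (f (X ω)) - P 0} from h),
        indicator_of_notMem (show f (X ω) ∉ I from fun hI => h hI.2)]
  simp_rw [hind]
  exact abs_integral_residual_mul_indicator_le_cutoffCE hY01 hf01 (sep_subset _ _) hIc

theorem integral_sub_comp_mul_residual [IsFiniteMeasure μ] (hX : Measurable X)
    (hY : Measurable Y) (hf : Measurable f) (hY01 : ∀ ω, Y ω ∈ Icc (0:ℝ) 1)
    (hf01 : ∀ x, f x ∈ Icc (0:ℝ) 1) {p q : ℝ → ℝ} (hp : MonotoneOn p (Icc 0 1))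
    (hq : MonotoneOn q (Icc 0 1)) :
    ∫ ω, (p - q) (f (X ω)) * (Y ω - f (X ω)) ∂μ =
      ∫ ω, (Y ω - f (X ω)) * (p (f (X ω)) - p 0) ∂μ -
        ∫ ω, (Y ω - f (X ω)) * (q (f (X ω)) - q 0) ∂μ + (p - q) 0 * ∫ ω, (Y ω - f (X ω)) ∂μ := by
  have hp' := integrable_residual_mul_sub (μ := μ) hX hY hf hY01 hf01 hp
  have hq' := integrable_residual_mul_sub (μ := μ) hX hY hf hY01 hf01 hq
  have hg := integrable_residual (μ := μ) hX hY hf hY01 hf01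
  calc _ = ∫ ω, ((Y ω - f (X ω)) * (p (f (X ω)) - p 0) -
        (Y ω - f (X ω)) * (q (f (X ω)) - q 0)) + (p - q) 0 * (Y ω - f (X ω)) ∂μ :=
        integral_congr_ae (.of_forall fun ω => by simp only [Pi.sub_apply]; ring)
    _ = _ := by
        rw [integral_add (hp'.sub hq' : Integrable (fun ω => _ - _) μ) (hg.const_mul _),
          integral_sub hp' hq', integral_const_mul]

theorem abs_integral_mul_residual_le_cutoffCE [IsFiniteMeasure μ] (hX : Measurable X)
    (hY : Measurable Y) (hf : Measurable f) (hY01 : ∀ ω, Y ω ∈ Icc (0:ℝ) 1)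
    (hf01 : ∀ x, f x ∈ Icc (0:ℝ) 1) {w : ℝ → ℝ} (hw : BoundedVariationOn w (Icc 0 1))
    (hw0 : |w 0| ≤ 1) :
    |∫ ω, w (f (X ω)) * (Y ω - f (X ω)) ∂μ| ≤
      ((eVariationOn w (Icc 0 1)).toReal + 1) * cutoffCE μ X Y f := by
  obtain ⟨p, q, hp, hq, rfl, hpq⟩ :=
    hw.locallyBoundedVariationOn.exists_monotoneOn_sub_monotoneOn_add_eq
      (left_mem_Icc.2 zero_le_one)
  have hvar : (p 1 - p 0) + (q 1 - q 0) = (eVariationOn (p - q) (Icc 0 1)).toReal := by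
    have h1 := congrFun hpq 1
    have h0 := congrFun hpq 0
    simp only [Pi.add_apply, variationOnFromTo.self] at h0 h1
    rw [variationOnFromTo.eq_of_le _ _ zero_le_one, inter_self] at h1
    linarith
  have hΔ : 0 ≤ cutoffCE μ X Y f := cutoffCE_nonneg
  have hP := abs_integral_residual_mul_sub_le_cutoffCE (μ := μ) hX hY hf hY01 hf01 hp
  have hQ := abs_integral_residual_mul_sub_le_cutoffCE (μ := μ) hX hY hf hY01 hf01 hq
  have hG := abs_integral_residual_le_cutoffCE (μ := μ) (X := X) hY01 hf01
  rw [integral_sub_comp_mul_residual hX hY hf hY01 hf01 hp hq, ← hvar]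
  calc _ ≤ |∫ ω, (Y ω - f (X ω)) * (p (f (X ω)) - p 0) ∂μ| +
        |∫ ω, (Y ω - f (X ω)) * (q (f (X ω)) - q 0) ∂μ| +
        |(p - q) 0| * |∫ ω, (Y ω - f (X ω)) ∂μ| := by
        grw [abs_add_le, abs_sub, abs_mul]
    _ ≤ (p 1 - p 0) * cutoffCE μ X Y f + (q 1 - q 0) * cutoffCE μ X Y f +
        1 * cutoffCE μ X Y f := by gcongr
    _ = _ := by ring

theorem integral_le_wCEBV [IsFiniteMeasure μ] (hY01 : ∀ ω, Y ω ∈ Icc (0:ℝ) 1)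
    (hf01 : ∀ x, f x ∈ Icc (0:ℝ) 1) {M : ℝ} {w : ℝ → ℝ}
    (hw1 : ∀ t ∈ Icc (0:ℝ) 1, w t ∈ Icc (-1:ℝ) 1)
    (hwM : eVariationOn w (Icc 0 1) ≤ ENNReal.ofReal M) :
    ∫ ω, w (f (X ω)) * (Y ω - f (X ω)) ∂μ ≤ wCEBV μ X Y f M := by
  refine le_ciSup (f := fun w : {w : ℝ → ℝ // (∀ t ∈ Icc (0:ℝ) 1, w t ∈ Icc (-1:ℝ) 1) ∧
      eVariationOn w (Icc 0 1) ≤ ENNReal.ofReal M} =>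
    ∫ ω, w.1 (f (X ω)) * (Y ω - f (X ω)) ∂μ) ?_ ⟨w, hw1, hwM⟩
  refine ⟨μ.real univ, forall_mem_range.2 fun w => (le_abs_self _).trans ?_⟩
  simp_rw [mul_comm (w.1 _)]
  exact abs_integral_residual_mul_le hY01 hf01 fun ω => abs_le.2 (w.2.1 _ (hf01 (X ω)))

theorem cutoffCE_le_wCEBV [IsFiniteMeasure μ] (hY01 : ∀ ω, Y ω ∈ Icc (0:ℝ) 1)
    (hf01 : ∀ x, f x ∈ Icc (0:ℝ) 1) {M : ℝ} (hM : 2 ≤ M) :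
    cutoffCE μ X Y f ≤ wCEBV μ X Y f M := by
  have : Nonempty {I : Set ℝ // I ⊆ Icc 0 1 ∧ I.OrdConnected} :=
    ⟨⟨∅, empty_subset _, ordConnected_empty⟩⟩
  refine ciSup_le fun ⟨I, _, hIc⟩ => ?_
  have hM' : (2 : ENNReal) ≤ ENNReal.ofReal M := by
    simpa using ENNReal.ofReal_le_ofReal hM
  have hvar := (hIc.eVariationOn_indicator_one_le (Icc 0 1)).trans hM'
  have hbound : ∀ t ∈ Icc (0:ℝ) 1, I.indicator 1 t ∈ Icc (-1:ℝ) 1 := fun t _ => by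
    by_cases ht : t ∈ I <;> simp [ht]
  refine abs_le'.2 ⟨?_, ?_⟩
  · exact (integral_congr_ae (.of_forall fun ω => mul_comm _ _)).trans_le
      (integral_le_wCEBV hY01 hf01 hbound hvar)
  · have hnegbound : ∀ t ∈ Icc (0:ℝ) 1, (-I.indicator 1) t ∈ Icc (-1:ℝ) 1 := fun t ht =>
      ⟨neg_le_neg (hbound t ht).2, neg_le.2 (hbound t ht).1⟩
    refine Eq.trans_le ?_
      (integral_le_wCEBV hY01 hf01 hnegbound ((eVariationOn_neg _ _).trans_le hvar))
    rw [← integral_neg]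
    exact integral_congr_ae (.of_forall fun ω => by simp only [Pi.neg_apply]; ring)

theorem wCEBV_le_add_one_mul_cutoffCE [IsFiniteMeasure μ] (hX : Measurable X)
    (hY : Measurable Y) (hf : Measurable f) (hY01 : ∀ ω, Y ω ∈ Icc (0:ℝ) 1)
    (hf01 : ∀ x, f x ∈ Icc (0:ℝ) 1) {M : ℝ} (hM : 0 ≤ M) :
    wCEBV μ X Y f M ≤ (M + 1) * cutoffCE μ X Y f := by
  have : Nonempty {w : ℝ → ℝ // (∀ t ∈ Icc (0:ℝ) 1, w t ∈ Icc (-1:ℝ) 1) ∧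
      eVariationOn w (Icc 0 1) ≤ ENNReal.ofReal M} :=
    ⟨⟨0, fun _ _ => by simp, by simp [eVariationOn.constant_on]⟩⟩
  refine ciSup_le fun ⟨w, hw1, hwM⟩ => ?_
  have hwBV : BoundedVariationOn w (Icc 0 1) := ne_top_of_le_ne_top ENNReal.ofReal_ne_top hwM
  calc _ ≤ _ := le_abs_self _
    _ ≤ _ := abs_integral_mul_residual_le_cutoffCE hX hY hf hY01 hf01 hwBV
        (abs_le.2 (hw1 0 (left_mem_Icc.2 zero_le_one)))
    _ ≤ (M + 1) * cutoffCE μ X Y f := by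
        gcongr
        · exact cutoffCE_nonneg
        · exact ENNReal.toReal_le_of_le_ofReal hM hwM

end Calibration

/-- For `M ≥ 2`: `Δ_Cutoff(f) ≤ Δ_wCE(f; B_M) ≤ (M+2)·Δ_Cutoff(f)`. -/
theorem cutoff_le_wce_le_cutoff {Ω 𝒳 : Type*} [MeasurableSpace Ω] [MeasurableSpace 𝒳]
    (μ : Measure Ω) [IsProbabilityMeasure μ]
    (X : Ω → 𝒳) (Y : Ω → ℝ) (f : 𝒳 → ℝ)
    (hX : Measurable X) (hY : Measurable Y) (hf : Measurable f)
    (hY01 : ∀ ω, Y ω ∈ Icc (0:ℝ) 1) (hf01 : ∀ x, f x ∈ Icc (0:ℝ) 1)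
    (M : ℝ) (hM : 2 ≤ M) :
    cutoffCE μ X Y f ≤ wCEBV μ X Y f M ∧
      wCEBV μ X Y f M ≤ (M + 2) * cutoffCE μ X Y f :=
  ⟨cutoffCE_le_wCEBV hY01 hf01 hM,
    (wCEBV_le_add_one_mul_cutoffCE hX hY hf hY01 hf01 (by linarith)).trans
      (mul_le_mul_of_nonneg_right (by linarith) cutoffCE_nonneg)⟩
end

section
/- For any measurable forecast f: 𝒳 → [0,1], any τ ∈ [0,1], and any joint distribution of (X,Y) with Y ∈ {0,1}: R_bd(f; τ) − inf over all monotone non-decreasing h: [0,1] → [0,1] of R_bd(h∘f; τ) ≤ 2·Δ_Cutoff(f). -/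
open MeasureTheory Set

/-- Plug-in risk for the binary decision loss
`ℓ_bd(y, ŷ; τ) = τ(1−y)ŷ + (1−τ)y(1−ŷ)` with plug-in decision rule `1{g(X) ≥ τ}`. -/
noncomputable def Rbd {Ω 𝒳 : Type*} [MeasurableSpace Ω] [MeasurableSpace 𝒳]
    (μ : Measure Ω) (X : Ω → 𝒳) (Y : Ω → ℝ) (g : 𝒳 → ℝ) (τ : ℝ) : ℝ :=
  ∫ ω, (τ * (1 - Y ω) * (if τ ≤ g (X ω) then (1:ℝ) else 0)
      + (1 - τ) * Y ω * (1 - if τ ≤ g (X ω) then (1:ℝ) else 0)) ∂μ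

/-! With `d_g := 1{τ ≤ g X}` the binary decision loss is `(τ - Y) d_g + (1 - τ) Y`, so
`R(f) - R(h ∘ f) = E[(τ - Y)(d_f - d_{h∘f})]`. Replacing `Y` by `f X` gives a nonpositive
term, because `d_f` is exactly the sign pattern of `f X - τ`. What is left is
`E[(Y - f X) d_{h∘f}] - E[(Y - f X) d_f]`, and both decision regions are preimages under `f X`
of up-sets (`[τ, ∞)` and `{t | τ ≤ h t}`, as `h` is monotone), i.e. of intervals, so each term
is at most `Δ_Cutoff(f)` in absolute value. -/

section CutoffCalibration

variable {Ω 𝒳 : Type*} [MeasurableSpace Ω] [MeasurableSpace 𝒳] {μ : Measure Ω}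
  {X : Ω → 𝒳} {Y : Ω → ℝ} {f : 𝒳 → ℝ}

lemma bddAbove_range_abs_integral_mul_indicator {ι : Type*} {g : Ω → ℝ} (hg : Integrable g μ)
    (φ : Ω → ℝ) (s : ι → Set ℝ) :
    BddAbove (range fun i => |∫ ω, g ω * (s i).indicator (1 : ℝ → ℝ) (φ ω) ∂μ|) := by
  refine ⟨∫ ω, |g ω| ∂μ, ?_⟩
  rintro r ⟨i, rfl⟩
  refine abs_integral_le_integral_abs.trans
    (integral_mono_of_nonneg (ae_of_all _ fun ω => abs_nonneg _) hg.abs (ae_of_all _ fun ω => ?_))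
  have : |(s i).indicator (1 : ℝ → ℝ) (φ ω)| ≤ 1 := by
    by_cases hmem : φ ω ∈ s i <;> simp [hmem]
  simp only [abs_mul]
  exact mul_le_of_le_one_right (abs_nonneg _) this

lemma abs_integral_mul_indicator_le_cutoffCE (hYf : Integrable (fun ω => Y ω - f (X ω)) μ)
    (hf01 : ∀ x, f x ∈ Icc (0:ℝ) 1) {S : Set ℝ} (hS : S.OrdConnected) :
    |∫ ω, (Y ω - f (X ω)) * S.indicator (1 : ℝ → ℝ) (f (X ω)) ∂μ| ≤ cutoffCE μ X Y f := by
  have hS01 : ∀ ω, S.indicator (1 : ℝ → ℝ) (f (X ω))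
      = (S ∩ Icc 0 1).indicator (1 : ℝ → ℝ) (f (X ω)) := fun ω => by
    by_cases hmem : f (X ω) ∈ S <;> simp [hmem, hf01 (X ω)]
  simp only [hS01]
  exact le_ciSup (bddAbove_range_abs_integral_mul_indicator hYf _ Subtype.val)
    ⟨S ∩ Icc 0 1, inter_subset_right, hS.inter ordConnected_Icc⟩

lemma abs_setIntegral_preimage_le_cutoffCE (hfX : Measurable fun ω => f (X ω))
    (hYf : Integrable (fun ω => Y ω - f (X ω)) μ) (hf01 : ∀ x, f x ∈ Icc (0:ℝ) 1)
    {S : Set ℝ} (hS : S.OrdConnected) :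
    |∫ ω in (fun ω => f (X ω)) ⁻¹' S, (Y ω - f (X ω)) ∂μ| ≤ cutoffCE μ X Y f := by
  rw [← integral_indicator (hfX hS.measurableSet)]
  convert abs_integral_mul_indicator_le_cutoffCE hYf hf01 hS using 4 with ω
  by_cases hmem : f (X ω) ∈ S <;> simp [hmem]

lemma Rbd_eq_setIntegral_add [IsFiniteMeasure μ] (hY : Integrable Y μ) {g : 𝒳 → ℝ} {τ : ℝ}
    (hg : MeasurableSet {ω | τ ≤ g (X ω)}) :
    Rbd μ X Y g τ = ∫ ω in {ω | τ ≤ g (X ω)}, (τ - Y ω) ∂μ + (1 - τ) * ∫ ω, Y ω ∂μ := by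
  have hτY : Integrable (fun ω => τ - Y ω) μ := (integrable_const τ).sub hY
  rw [← integral_indicator hg, ← integral_const_mul,
    ← integral_add (hτY.indicator hg) (hY.const_mul _), Rbd]
  congr 1 with ω
  by_cases hω : τ ≤ g (X ω) <;> simp [hω]; ring

lemma Rbd_sub_Rbd_comp_le_two_cutoffCE [IsFiniteMeasure μ] (hY : Integrable Y μ)
    (hfX : Measurable fun ω => f (X ω)) (hf01 : ∀ x, f x ∈ Icc (0:ℝ) 1)
    {h : ℝ → ℝ} (hh : Monotone h) (τ : ℝ) :
    Rbd μ X Y f τ - Rbd μ X Y (fun x => h (f x)) τ ≤ 2 * cutoffCE μ X Y f := by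
  have hS : (h ⁻¹' Ici τ).OrdConnected := ((isUpperSet_Ici τ).preimage hh).ordConnected
  have hA : MeasurableSet {ω | τ ≤ f (X ω)} := hfX measurableSet_Ici
  have hB : MeasurableSet {ω | τ ≤ h (f (X ω))} := hfX hS.measurableSet
  have hfXint : Integrable (fun ω => f (X ω)) μ := Integrable.of_bound hfX.aestronglyMeasurable 1
    (ae_of_all _ fun ω => abs_le.2 ⟨by linarith [(hf01 (X ω)).1], (hf01 (X ω)).2⟩)
  rw [Rbd_eq_setIntegral_add hY hA, Rbd_eq_setIntegral_add (g := fun x => h (f x)) hY hB,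
    add_sub_add_right_eq_sub]
  have hτf : Integrable (fun ω => τ - f (X ω)) μ := (integrable_const τ).sub hfXint
  have hYf : Integrable (fun ω => Y ω - f (X ω)) μ := hY.sub hfXint
  have hsplit : ∀ s, ∫ ω in s, (τ - Y ω) ∂μ
      = ∫ ω in s, (τ - f (X ω)) ∂μ - ∫ ω in s, (Y ω - f (X ω)) ∂μ := fun s => by
    rw [← integral_sub hτf.integrableOn hYf.integrableOn]
    congr 1 with ω
    ring
  -- The integrand is `≤ 0` on `{τ ≤ f (X ω)}` and `> 0` off it, so that set minimises the integral.
  have hthreshold : ∫ ω in {ω | τ ≤ f (X ω)}, (τ - f (X ω)) ∂μ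
      ≤ ∫ ω in {ω | τ ≤ h (f (X ω))}, (τ - f (X ω)) ∂μ := by
    rw [← integral_indicator hA, ← integral_indicator hB]
    refine integral_mono (hτf.indicator hA) (hτf.indicator hB) fun ω => ?_
    simp only [indicator_apply, mem_ofPred_eq]
    split_ifs with hω hω' hω' <;> linarith
  have hCEA : |∫ ω in {ω | τ ≤ f (X ω)}, (Y ω - f (X ω)) ∂μ| ≤ cutoffCE μ X Y f :=
    abs_setIntegral_preimage_le_cutoffCE hfX hYf hf01 ordConnected_Ici
  have hCEB : |∫ ω in {ω | τ ≤ h (f (X ω))}, (Y ω - f (X ω)) ∂μ| ≤ cutoffCE μ X Y f :=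
    abs_setIntegral_preimage_le_cutoffCE hfX hYf hf01 hS
  rw [hsplit, hsplit]
  linarith [(abs_le.1 hCEA).1, (abs_le.1 hCEB).2]

end CutoffCalibration

theorem monotone_risk_gap_le_two_cutoff_general {Ω 𝒳 : Type*} [MeasurableSpace Ω] [MeasurableSpace 𝒳]
    (μ : Measure Ω) [IsProbabilityMeasure μ]
    (X : Ω → 𝒳) (Y : Ω → ℝ) (f : 𝒳 → ℝ)
    (hX : Measurable X) (hY : Measurable Y) (hf : Measurable f)
    (hYbin : ∀ ω, Y ω = 0 ∨ Y ω = 1) (hf01 : ∀ x, f x ∈ Icc (0:ℝ) 1)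
    (τ : ℝ) :
    Rbd μ X Y f τ -
        sInf {r : ℝ | ∃ h : ℝ → ℝ, Monotone h ∧ (∀ t, h t ∈ Icc (0:ℝ) 1) ∧
          r = Rbd μ X Y (fun x => h (f x)) τ}
      ≤ 2 * cutoffCE μ X Y f := by
  have hYint : Integrable Y μ := Integrable.of_bound hY.aestronglyMeasurable 1
    (ae_of_all _ fun ω => by rcases hYbin ω with hω | hω <;> simp [hω])
  rw [sub_le_comm]
  refine le_csInf ⟨_, fun _ => 0, monotone_const, fun _ => ⟨le_rfl, zero_le_one⟩, rfl⟩ ?_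
  rintro r ⟨h, hh, -, rfl⟩
  rw [sub_le_comm]
  exact Rbd_sub_Rbd_comp_le_two_cutoffCE (X := X) hYint (hf.comp hX) hf01 hh τ

/-- Cutoff Calibration Error bounds the monotone risk gap:
`R_bd(f; τ) − inf over monotone non-decreasing h : [0,1] → [0,1] of R_bd(h∘f; τ)
  ≤ 2·Δ_Cutoff(f)`. -/
theorem monotone_risk_gap_le_two_cutoff {Ω 𝒳 : Type*} [MeasurableSpace Ω] [MeasurableSpace 𝒳]
    (μ : Measure Ω) [IsProbabilityMeasure μ]
    (X : Ω → 𝒳) (Y : Ω → ℝ) (f : 𝒳 → ℝ)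
    (hX : Measurable X) (hY : Measurable Y) (hf : Measurable f)
    (hYbin : ∀ ω, Y ω = 0 ∨ Y ω = 1) (hf01 : ∀ x, f x ∈ Icc (0:ℝ) 1)
    (τ : ℝ) (hτ : τ ∈ Icc (0:ℝ) 1) :
    Rbd μ X Y f τ -
        sInf {r : ℝ | ∃ h : ℝ → ℝ, Monotone h ∧ (∀ t, h t ∈ Icc (0:ℝ) 1) ∧
          r = Rbd μ X Y (fun x => h (f x)) τ}
      ≤ 2 * cutoffCE μ X Y f :=
  monotone_risk_gap_le_two_cutoff_general μ X Y f hX hY hf hYbin hf01 τ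
end
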